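/- arXiv:1810.03882 — 5 statements merged into one kernel-verified Lean document; each statement's English description precedes it below -/
import Mathlib

section
/- The minimum over states in an ε-ball (trace distance) of any coherence monotone fails strong monotonicity: there exist a state ρ, an incoherent-Kraus decomposition {K_k} with outcomes ρ_k and probabilities p_k, such that ∑_k p_k C_{ε,min}(ρ_k) > C_{ε,min}(ρ). Concretely, for ρ = η|0⟩⟨0|⊗ρ_c + (1−η)|1⟩⟨1|⊗δ with δ incoherent, ρ_c coherent with C_{ε,min}(ρ_c) > 0, and η ≤ ε, one has C_{ε,min}(ρ) = 0 while the post-measurement average equals η·C_{ε,min}(ρ_c) > 0. -/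
open scoped ComplexOrder

open scoped Kronecker BigOperators

/-- A density matrix: positive semidefinite with unit trace. -/
def IsDensity {n : Type*} [Fintype n] (A : Matrix n n ℂ) : Prop :=
  A.PosSemidef ∧ A.trace = 1

/-- The trace distance `½ Tr|ρ − τ|`. -/
noncomputable def traceDist {n : Type*} [Fintype n] [DecidableEq n]
    (ρ τ : Matrix n n ℂ) : ℝ :=
  (((Matrix.posSemidef_conjTranspose_mul_self (ρ - τ)).1.eigenvectorUnitary.1 *
      Matrix.diagonal (((↑) : ℝ → ℂ) ∘ Real.sqrt ∘ (Matrix.posSemidef_conjTranspose_mul_self (ρ - τ)).1.eigenvalues) *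
      (star (Matrix.posSemidef_conjTranspose_mul_self (ρ - τ)).1.eigenvectorUnitary :
        Matrix n n ℂ)).trace).re / 2

/-- The ε-smooth measure of coherence with respect to the trace distance. -/
noncomputable def CminQ {n : Type*} [Fintype n] [DecidableEq n]
    (C : Matrix n n ℂ → ℝ) (ε : ℝ) (ρ : Matrix n n ℂ) : ℝ :=
  sInf (C '' {τ | IsDensity τ ∧ traceDist ρ τ ≤ ε})

/-!
The state `|1⟩⟨1| ⊗ δ` is incoherent and lies at trace distance exactly `η ≤ ε` from `ρ`: the
difference `η (|0⟩⟨0| ⊗ ρ_c) - η (|1⟩⟨1| ⊗ δ)` is a difference of positive matrices with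
orthogonal supports, so its absolute value is their sum, of trace `2η`. Hence the smooth
measure vanishes at `ρ`, while the measurement branch `|0⟩⟨0| ⊗ ρ_c` keeps weight `η > 0` and
positive smooth coherence.
-/

open Matrix

theorem isDiag_single {n : Type*} [DecidableEq n] (i : n) (c : ℂ) : (single i i c).IsDiag :=
  diagonal_single i c ▸ isDiag_diagonal _

section

variable {n : Type*} [Fintype n]

theorem IsDensity.kronecker {m : Type*} [Fintype m] {A : Matrix n n ℂ} {B : Matrix m m ℂ}
    (hA : IsDensity A) (hB : IsDensity B) : IsDensity (A ⊗ₖ B) :=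
  ⟨hA.1.kronecker hB.1, by rw [trace_kronecker, hA.2, hB.2, one_mul]⟩

variable [DecidableEq n]

theorem isDensity_single (i : n) : IsDensity (single i i (1 : ℂ)) :=
  ⟨diagonal_single i (1 : ℂ) ▸ PosSemidef.diagonal (Pi.single_nonneg.mpr zero_le_one),
    trace_single_eq_same i 1⟩

open scoped MatrixOrder in
theorem traceDist_eq_re_trace_sqrt (ρ τ : Matrix n n ℂ) :
    traceDist ρ τ = (CFC.sqrt ((ρ - τ)ᴴ * (ρ - τ))).trace.re / 2 := by
  have hM := posSemidef_conjTranspose_mul_self (ρ - τ)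
  rw [CFC.sqrt_eq_real_sqrt _ hM.nonneg, cfcₙ_eq_cfc, hM.1.cfc_eq, IsHermitian.cfc,
    Unitary.conjStarAlgAut_apply]
  rfl

open scoped MatrixOrder in
theorem traceDist_eq_of_conjTranspose_mul_self_eq {ρ τ S : Matrix n n ℂ} (hS : S.PosSemidef)
    (h : (ρ - τ)ᴴ * (ρ - τ) = S * S) : traceDist ρ τ = S.trace.re / 2 := by
  rw [traceDist_eq_re_trace_sqrt, h, CFC.sqrt_mul_self S hS.nonneg]

theorem traceDist_eq_of_sub_eq_sub {ρ τ P N : Matrix n n ℂ} (hP : P.PosSemidef)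
    (hN : N.PosSemidef) (hPN : P * N = 0) (h : ρ - τ = P - N) :
    traceDist ρ τ = (P.trace + N.trace).re / 2 := by
  have hNP : N * P = 0 := by
    rw [← hP.1.eq, ← hN.1.eq, ← conjTranspose_mul, hPN, conjTranspose_zero]
  rw [← trace_add]
  refine traceDist_eq_of_conjTranspose_mul_self_eq (hP.add hN) ?_
  rw [h, conjTranspose_sub, hP.1.eq, hN.1.eq]
  simp only [sub_mul, mul_sub, add_mul, mul_add, hPN, hNP]
  abel

theorem traceDist_mixture_single_kronecker {m : Type*} [Fintype m] [DecidableEq m] {i j : n}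
    (hij : i ≠ j) {A B : Matrix m m ℂ} (hA : IsDensity A) (hB : IsDensity B) {η : ℝ}
    (hη : 0 ≤ η) :
    traceDist ((η : ℂ) • (single i i 1 ⊗ₖ A) + ((1 - η : ℝ) : ℂ) • (single j j 1 ⊗ₖ B))
      (single j j 1 ⊗ₖ B) = η := by
  have hη' : (0 : ℂ) ≤ η := by exact_mod_cast hη
  rw [traceDist_eq_of_sub_eq_sub (((isDensity_single i).1.kronecker hA.1).smul hη')
      (((isDensity_single j).1.kronecker hB.1).smul hη')]
  · simp [trace_kronecker, hA.2, hB.2]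
  · rw [smul_mul_smul_comm, ← mul_kronecker_mul, single_mul_single_of_ne (h := hij),
      zero_kronecker, smul_zero]
  · push_cast
    module

theorem CminQ_nonneg {C : Matrix n n ℂ → ℝ} (hC : ∀ τ, 0 ≤ C τ) (ε : ℝ) (ρ : Matrix n n ℂ) :
    0 ≤ CminQ C ε ρ :=
  Real.sInf_nonneg (by rintro _ ⟨τ, -, rfl⟩; exact hC τ)

theorem CminQ_eq_zero_of_traceDist_le {C : Matrix n n ℂ → ℝ} (hC : ∀ τ, 0 ≤ C τ) {ε : ℝ}
    {ρ τ : Matrix n n ℂ} (hτ : IsDensity τ) (hρτ : traceDist ρ τ ≤ ε) (hCτ : C τ = 0) :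
    CminQ C ε ρ = 0 := by
  refine le_antisymm ?_ (CminQ_nonneg hC ε ρ)
  rw [← hCτ]
  exact csInf_le ⟨0, by rintro _ ⟨σ, -, rfl⟩; exact hC σ⟩ ⟨τ, ⟨hτ, hρτ⟩, rfl⟩

end

/-- The ε-smooth measure of coherence fails strong monotonicity: for
`ρ = η|0⟩⟨0|⊗ρ_c + (1−η)|1⟩⟨1|⊗δ` with `δ` incoherent and `η ≤ ε`, one has
`C_{ε,min}(ρ) = 0`, while the average over the outcomes of the incoherent
measurement `{|0⟩⟨0|⊗I, |1⟩⟨1|⊗I}` equals `η·C_{ε,min}(|0⟩⟨0|⊗ρ_c) > 0`. -/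
theorem epsilon_smooth_coherence_no_strong_monotonicity
    {d : ℕ} (C : Matrix (Fin 2 × Fin d) (Fin 2 × Fin d) ℂ → ℝ)
    (hCnn : ∀ τ, 0 ≤ C τ)
    -- C vanishes on incoherent (diagonal) states
    (hC0 : ∀ τ, Matrix.IsDiag τ → C τ = 0)
    (ρc δ : Matrix (Fin d) (Fin d) ℂ)
    (hρc : IsDensity ρc) (hδ : IsDensity δ) (hδdiag : Matrix.IsDiag δ)
    (η ε : ℝ) (hη0 : 0 < η) (hη1 : η ≤ 1) (hηε : η ≤ ε)
    (e0 e1 : Matrix (Fin 2) (Fin 2) ℂ)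
    (he0 : e0 = Matrix.single 0 0 1)
    (he1 : e1 = Matrix.single 1 1 1)
    (ρ : Matrix (Fin 2 × Fin d) (Fin 2 × Fin d) ℂ)
    (hρ : ρ = (η : ℂ) • (e0 ⊗ₖ ρc) + ((1 - η : ℝ) : ℂ) • (e1 ⊗ₖ δ))
    -- ρ_c is coherent enough: C_{ε,min}(|0⟩⟨0|⊗ρ_c) > 0
    (hcoh : 0 < CminQ C ε (e0 ⊗ₖ ρc)) :
    CminQ C ε ρ = 0 ∧
      CminQ C ε ρ <
        η * CminQ C ε (e0 ⊗ₖ ρc) + (1 - η) * CminQ C ε (e1 ⊗ₖ δ) := by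
  subst he0 he1 hρ
  have hdist := traceDist_mixture_single_kronecker (i := (0 : Fin 2)) (j := 1) (by decide) hρc hδ
    hη0.le
  have hzero := CminQ_eq_zero_of_traceDist_le hCnn ((isDensity_single 1).kronecker hδ)
    (hdist.trans_le hηε) (hC0 _ ((isDiag_single 1 1).kronecker hδdiag))
  have hδbranch := CminQ_nonneg hCnn ε (single 1 1 1 ⊗ₖ δ)
  refine ⟨hzero, ?_⟩
  rw [hzero]
  exact add_pos_of_pos_of_nonneg (mul_pos hη0 hcoh) (mul_nonneg (sub_nonneg.2 hη1) hδbranch)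
end

section
/- Let C be a convex coherence measure (vanishing on incoherent states), D a convex distance with triangle inequality, and C_D(ρ) = min_{δ∈ℐ} D(ρ,δ) ≥ ε. Then the ε-smooth quantifier satisfies the upper bound C_{ε,min}(ρ) ≤ (1 − ε/C_D(ρ)) · C(ρ). -/
/-- The ε-smooth measure of coherence. -/
noncomputable def Cmin {V : Type*} (𝒟 : Set V) (D : V → V → ℝ) (C : V → ℝ)
    (ε : ℝ) (ρ : V) : ℝ :=
  sInf (C '' {τ | τ ∈ 𝒟 ∧ D ρ τ ≤ ε})

/-- The distance-based coherence quantifier `C_D(ρ) = inf_{δ∈ℐ} D(ρ,δ)`. -/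
noncomputable def CD {V : Type*} (ℐ : Set V) (D : V → V → ℝ) (ρ : V) : ℝ :=
  sInf (D ρ '' ℐ)

/-! Mixing `ρ` with an incoherent state `δ` in proportion `p` moves it by at most
`p · D(ρ, δ)` and scales its coherence by `1 - p`; with `p = ε / C_D(ρ)` and `δ` optimal,
the mixture is an admissible competitor in the infimum defining `C_{ε,min}(ρ)`. -/

theorem Cmin_le {V : Type*} {𝒟 : Set V} {D : V → V → ℝ} {C : V → ℝ} {ε : ℝ} {ρ τ : V}
    (hC : ∀ σ ∈ 𝒟, 0 ≤ C σ) (hτ : τ ∈ 𝒟) (hDτ : D ρ τ ≤ ε) : Cmin 𝒟 D C ε ρ ≤ C τ :=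
  csInf_le ⟨0, by rintro _ ⟨σ, ⟨hσ, -⟩, rfl⟩; exact hC σ hσ⟩ ⟨τ, ⟨hτ, hDτ⟩, rfl⟩

theorem dist_mix_le {V : Type*} [AddCommGroup V] [Module ℝ V] {D : V → V → ℝ}
    (hDrefl : ∀ ρ, D ρ ρ = 0)
    (hDconv2 : ∀ lam : ℝ, 0 ≤ lam → lam ≤ 1 → ∀ ρ τ σ : V,
      D ρ (lam • τ + (1 - lam) • σ) ≤ lam * D ρ τ + (1 - lam) * D ρ σ)
    {p : ℝ} (hp0 : 0 ≤ p) (hp1 : p ≤ 1) (ρ δ : V) :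
    D ρ (p • δ + (1 - p) • ρ) ≤ p * D ρ δ := by
  simpa [hDrefl] using hDconv2 p hp0 hp1 ρ δ ρ

theorem ConvexOn.mix_le_of_eq_zero {V : Type*} [AddCommGroup V] [Module ℝ V] {𝒟 : Set V}
    {C : V → ℝ} (hC : ConvexOn ℝ 𝒟 C) {ρ δ : V} (hρ : ρ ∈ 𝒟) (hδ : δ ∈ 𝒟) (hδ0 : C δ = 0)
    {p : ℝ} (hp0 : 0 ≤ p) (hp1 : p ≤ 1) :
    C (p • δ + (1 - p) • ρ) ≤ (1 - p) * C ρ := by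
  simpa [hδ0] using hC.2 hδ hρ hp0 (sub_nonneg.2 hp1) (add_sub_cancel p 1)

theorem epsilon_smooth_coherence_upper_bound_general
    {V : Type*} [AddCommGroup V] [Module ℝ V]
    (𝒟 ℐ : Set V) (hconv : Convex ℝ 𝒟) (hIsub : ℐ ⊆ 𝒟)
    (D : V → V → ℝ) (C : V → ℝ)
    (hDrefl : ∀ ρ, D ρ ρ = 0)
    -- convexity of D in each argument
    (hDconv2 : ∀ lam : ℝ, 0 ≤ lam → lam ≤ 1 → ∀ ρ τ σ : V,
      D ρ (lam • τ + (1 - lam) • σ) ≤ lam * D ρ τ + (1 - lam) * D ρ σ)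
    (hCnn : ∀ ρ ∈ 𝒟, 0 ≤ C ρ)
    (hCconv : ConvexOn ℝ 𝒟 C)
    -- C vanishes on incoherent states
    (hC0 : ∀ δ ∈ ℐ, C δ = 0)
    (ρ : V) (hρ : ρ ∈ 𝒟)
    -- C_D(ρ) is attained at some incoherent state
    (δstar : V) (hδstar : δstar ∈ ℐ) (hopt : D ρ δstar = CD ℐ D ρ)
    (ε : ℝ) (hε : 0 < ε) (hεCD : ε ≤ CD ℐ D ρ) :
    Cmin 𝒟 D C ε ρ ≤ (1 - ε / CD ℐ D ρ) * C ρ := by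
  have hCD : 0 < CD ℐ D ρ := hε.trans_le hεCD
  set p := ε / CD ℐ D ρ
  have hp0 : 0 ≤ p := by positivity
  have hp1 : p ≤ 1 := div_le_one_of_le₀ hεCD hCD.le
  have hδ : δstar ∈ 𝒟 := hIsub hδstar
  have hmix : p • δstar + (1 - p) • ρ ∈ 𝒟 :=
    hconv hδ hρ hp0 (sub_nonneg.2 hp1) (add_sub_cancel p 1)
  have hclose : D ρ (p • δstar + (1 - p) • ρ) ≤ ε := by
    calc D ρ (p • δstar + (1 - p) • ρ) ≤ p * D ρ δstar :=
          dist_mix_le hDrefl hDconv2 hp0 hp1 ρ δstar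
      _ = ε := by rw [hopt, div_mul_cancel₀ ε hCD.ne']
  calc Cmin 𝒟 D C ε ρ ≤ C (p • δstar + (1 - p) • ρ) := Cmin_le hCnn hmix hclose
    _ ≤ (1 - p) * C ρ := hCconv.mix_le_of_eq_zero hρ hδ (hC0 δstar hδstar) hp0 hp1

/-- Upper bound: `C_{ε,min}(ρ) ≤ (1 − ε/C_D(ρ))·C(ρ)` whenever `ε ≤ C_D(ρ)`. -/
theorem epsilon_smooth_coherence_upper_bound
    {V : Type*} [AddCommGroup V] [Module ℝ V]
    (𝒟 ℐ : Set V) (hconv : Convex ℝ 𝒟) (hIsub : ℐ ⊆ 𝒟) (hIne : ℐ.Nonempty)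
    (D : V → V → ℝ) (C : V → ℝ)
    (hDnn : ∀ ρ τ, 0 ≤ D ρ τ)
    (hDsymm : ∀ ρ τ, D ρ τ = D τ ρ)
    (hDtri : ∀ ρ σ τ, D ρ τ ≤ D ρ σ + D σ τ)
    (hDrefl : ∀ ρ, D ρ ρ = 0)
    -- convexity of D in each argument
    (hDconv1 : ∀ lam : ℝ, 0 ≤ lam → lam ≤ 1 → ∀ ρ₁ ρ₂ δ : V,
      D (lam • ρ₁ + (1 - lam) • ρ₂) δ ≤ lam * D ρ₁ δ + (1 - lam) * D ρ₂ δ)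
    (hDconv2 : ∀ lam : ℝ, 0 ≤ lam → lam ≤ 1 → ∀ ρ τ σ : V,
      D ρ (lam • τ + (1 - lam) • σ) ≤ lam * D ρ τ + (1 - lam) * D ρ σ)
    (hCnn : ∀ ρ ∈ 𝒟, 0 ≤ C ρ)
    (hCconv : ConvexOn ℝ 𝒟 C)
    -- C vanishes on incoherent states
    (hC0 : ∀ δ ∈ ℐ, C δ = 0)
    (ρ : V) (hρ : ρ ∈ 𝒟)
    -- C_D(ρ) is attained at some incoherent state
    (δstar : V) (hδstar : δstar ∈ ℐ) (hopt : D ρ δstar = CD ℐ D ρ)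
    (ε : ℝ) (hε : 0 < ε) (hεCD : ε ≤ CD ℐ D ρ) :
    Cmin 𝒟 D C ε ρ ≤ (1 - ε / CD ℐ D ρ) * C ρ :=
  epsilon_smooth_coherence_upper_bound_general 𝒟 ℐ hconv hIsub D C hDrefl hDconv2 hCnn hCconv hC0 ρ
    hρ δstar hδstar hopt ε hε hεCD
end

section
/- If C = C_D is itself the distance-based coherence quantifier and ε ≤ C_D(ρ), then the ε-smooth version satisfies the exact identity C_D(ρ) = (C_D)_{ε,min}(ρ) + ε, where the smoothing is with respect to the same distance D. -/
/-- The ε-smooth version of the distance-based coherence quantifier itself. -/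
noncomputable def CDmin {V : Type*} (𝒟 ℐ : Set V) (D : V → V → ℝ)
    (ε : ℝ) (ρ : V) : ℝ :=
  sInf (CD ℐ D '' {τ | τ ∈ 𝒟 ∧ D ρ τ ≤ ε})

/-!
The triangle inequality makes `C_D` 1-Lipschitz for `D`, so moving `ρ` by at most `ε` lowers
`C_D` by at most `ε`. Conversely, the point `τ = p • δ* + (1 - p) • ρ` with `p = ε / C_D(ρ)` on
the segment from `ρ` to a closest incoherent state `δ*` is within `ε` of `ρ` and within
`C_D(ρ) - ε` of `δ*`, by convexity of `D` in each argument.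
-/

section Coherence

variable {V : Type*} {𝒟 ℐ : Set V} {D : V → V → ℝ}

theorem CD_nonneg (hDnn : ∀ ρ τ, 0 ≤ D ρ τ) (ρ : V) : 0 ≤ CD ℐ D ρ :=
  Real.sInf_nonneg (by rintro _ ⟨δ, -, rfl⟩; exact hDnn ρ δ)

theorem CD_le (hDnn : ∀ ρ τ, 0 ≤ D ρ τ) {ρ δ : V} (hδ : δ ∈ ℐ) : CD ℐ D ρ ≤ D ρ δ :=
  csInf_le ⟨0, by rintro _ ⟨δ, -, rfl⟩; exact hDnn ρ δ⟩ ⟨δ, hδ, rfl⟩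

theorem CD_le_add_CD (hI : ℐ.Nonempty) (hDnn : ∀ ρ τ, 0 ≤ D ρ τ)
    (hDtri : ∀ ρ σ τ, D ρ τ ≤ D ρ σ + D σ τ) (ρ τ : V) :
    CD ℐ D ρ ≤ D ρ τ + CD ℐ D τ := by
  rw [← sub_le_iff_le_add']
  refine le_csInf (hI.image _) ?_
  rintro _ ⟨δ, hδ, rfl⟩
  linarith [CD_le hDnn (ρ := ρ) hδ, hDtri ρ τ δ]

theorem CDmin_le (hDnn : ∀ ρ τ, 0 ≤ D ρ τ) {ε : ℝ} {ρ τ : V} (hτ : τ ∈ 𝒟)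
    (hρτ : D ρ τ ≤ ε) : CDmin 𝒟 ℐ D ε ρ ≤ CD ℐ D τ :=
  csInf_le ⟨0, by rintro _ ⟨σ, -, rfl⟩; exact CD_nonneg hDnn σ⟩ ⟨τ, ⟨hτ, hρτ⟩, rfl⟩

theorem CD_le_CDmin_add (hI : ℐ.Nonempty) (hDnn : ∀ ρ τ, 0 ≤ D ρ τ)
    (hDtri : ∀ ρ σ τ, D ρ τ ≤ D ρ σ + D σ τ) (hDrefl : ∀ ρ, D ρ ρ = 0)
    {ε : ℝ} (hε : 0 ≤ ε) {ρ : V} (hρ : ρ ∈ 𝒟) :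
    CD ℐ D ρ ≤ CDmin 𝒟 ℐ D ε ρ + ε := by
  rw [← sub_le_iff_le_add]
  refine le_csInf ⟨_, ρ, ⟨hρ, (hDrefl ρ).trans_le hε⟩, rfl⟩ ?_
  rintro _ ⟨τ, ⟨-, hρτ⟩, rfl⟩
  linarith [CD_le_add_CD hI hDnn hDtri ρ τ]

end Coherence

theorem exists_mem_segment_dist_le {V : Type*} [AddCommGroup V] [Module ℝ V]
    {D : V → V → ℝ} (hDrefl : ∀ ρ, D ρ ρ = 0)
    (hDconv1 : ∀ lam : ℝ, 0 ≤ lam → lam ≤ 1 → ∀ ρ₁ ρ₂ δ : V,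
      D (lam • ρ₁ + (1 - lam) • ρ₂) δ ≤ lam * D ρ₁ δ + (1 - lam) * D ρ₂ δ)
    (hDconv2 : ∀ lam : ℝ, 0 ≤ lam → lam ≤ 1 → ∀ ρ τ σ : V,
      D ρ (lam • τ + (1 - lam) • σ) ≤ lam * D ρ τ + (1 - lam) * D ρ σ)
    {ρ δ : V} {ε : ℝ} (hε0 : 0 ≤ ε) (hε : ε ≤ D ρ δ) :
    ∃ τ ∈ segment ℝ δ ρ, D ρ τ ≤ ε ∧ D τ δ ≤ D ρ δ - ε := by
  set p := ε / D ρ δ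
  -- when `D ρ δ = 0` also `ε = 0`, and then `p = 0 / 0 = 0` still satisfies this
  have hpC : p * D ρ δ = ε := by
    rcases (hε0.trans hε).eq_or_lt with h | h
    · simp [p, ← h, le_antisymm (h ▸ hε) hε0]
    · exact div_mul_cancel₀ ε h.ne'
  have hp0 : 0 ≤ p := div_nonneg hε0 (hε0.trans hε)
  have hp1 : p ≤ 1 := div_le_one_of_le₀ hε (hε0.trans hε)
  refine ⟨p • δ + (1 - p) • ρ, ⟨p, 1 - p, hp0, by linarith, by ring, rfl⟩, ?_, ?_⟩
  · have := hDconv2 p hp0 hp1 ρ δ ρ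
    rw [hDrefl] at this
    linarith
  · have := hDconv1 p hp0 hp1 δ ρ δ
    rw [hDrefl] at this
    linarith

theorem epsilon_smooth_distance_coherence_identity_general
    {V : Type*} [AddCommGroup V] [Module ℝ V]
    (𝒟 ℐ : Set V) (hconv : Convex ℝ 𝒟) (hIsub : ℐ ⊆ 𝒟)
    (D : V → V → ℝ)
    (hDnn : ∀ ρ τ, 0 ≤ D ρ τ)
    (hDtri : ∀ ρ σ τ, D ρ τ ≤ D ρ σ + D σ τ)
    (hDrefl : ∀ ρ, D ρ ρ = 0)
    -- convexity of D in each argument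
    (hDconv1 : ∀ lam : ℝ, 0 ≤ lam → lam ≤ 1 → ∀ ρ₁ ρ₂ δ : V,
      D (lam • ρ₁ + (1 - lam) • ρ₂) δ ≤ lam * D ρ₁ δ + (1 - lam) * D ρ₂ δ)
    (hDconv2 : ∀ lam : ℝ, 0 ≤ lam → lam ≤ 1 → ∀ ρ τ σ : V,
      D ρ (lam • τ + (1 - lam) • σ) ≤ lam * D ρ τ + (1 - lam) * D ρ σ)
    (ρ : V) (hρ : ρ ∈ 𝒟)
    -- C_D(ρ) is attained at some incoherent state δ*
    (δstar : V) (hδstar : δstar ∈ ℐ) (hopt : D ρ δstar = CD ℐ D ρ)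
    (ε : ℝ) (hε0 : 0 ≤ ε) (hεCD : ε ≤ CD ℐ D ρ) :
    CD ℐ D ρ = CDmin 𝒟 ℐ D ε ρ + ε := by
  refine le_antisymm (CD_le_CDmin_add ⟨δstar, hδstar⟩ hDnn hDtri hDrefl hε0 hρ) ?_
  obtain ⟨τ, hτ, hρτ, hτδ⟩ :=
    exists_mem_segment_dist_le hDrefl hDconv1 hDconv2 hε0 (hopt ▸ hεCD)
  have hτ𝒟 : τ ∈ 𝒟 := hconv.segment_subset (hIsub hδstar) hρ hτ
  calc CDmin 𝒟 ℐ D ε ρ + ε ≤ CD ℐ D τ + ε := by gcongr; exact CDmin_le hDnn hτ𝒟 hρτ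
    _ ≤ D τ δstar + ε := by gcongr; exact CD_le hDnn hδstar
    _ ≤ CD ℐ D ρ := by linarith

/-- Exact identity `C_D(ρ) = (C_D)_{ε,min}(ρ) + ε` for `ε ≤ C_D(ρ)`. -/
theorem epsilon_smooth_distance_coherence_identity
    {V : Type*} [AddCommGroup V] [Module ℝ V]
    (𝒟 ℐ : Set V) (hconv : Convex ℝ 𝒟) (hIsub : ℐ ⊆ 𝒟) (hIne : ℐ.Nonempty)
    (D : V → V → ℝ)
    (hDnn : ∀ ρ τ, 0 ≤ D ρ τ)
    (hDsymm : ∀ ρ τ, D ρ τ = D τ ρ)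
    (hDtri : ∀ ρ σ τ, D ρ τ ≤ D ρ σ + D σ τ)
    (hDrefl : ∀ ρ, D ρ ρ = 0)
    -- convexity of D in each argument
    (hDconv1 : ∀ lam : ℝ, 0 ≤ lam → lam ≤ 1 → ∀ ρ₁ ρ₂ δ : V,
      D (lam • ρ₁ + (1 - lam) • ρ₂) δ ≤ lam * D ρ₁ δ + (1 - lam) * D ρ₂ δ)
    (hDconv2 : ∀ lam : ℝ, 0 ≤ lam → lam ≤ 1 → ∀ ρ τ σ : V,
      D ρ (lam • τ + (1 - lam) • σ) ≤ lam * D ρ τ + (1 - lam) * D ρ σ)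
    (ρ : V) (hρ : ρ ∈ 𝒟)
    -- C_D(ρ) is attained at some incoherent state δ*
    (δstar : V) (hδstar : δstar ∈ ℐ) (hopt : D ρ δstar = CD ℐ D ρ)
    -- the minimum over the ε-ball is attained
    (ε : ℝ) (hε0 : 0 ≤ ε) (hεCD : ε ≤ CD ℐ D ρ)
    (hattain : ∃ τ, τ ∈ 𝒟 ∧ D ρ τ ≤ ε ∧ CD ℐ D τ = CDmin 𝒟 ℐ D ε ρ) :
    CD ℐ D ρ = CDmin 𝒟 ℐ D ε ρ + ε :=
  epsilon_smooth_distance_coherence_identity_general 𝒟 ℐ hconv hIsub D hDnn hDtri hDrefl hDconv1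
    hDconv2 ρ hρ δstar hδstar hopt ε hε0 hεCD
end

section
/- The ε-smooth relative entropy of coherence C_{r,ε}(ρ) = min{ C_r(τ) : S(ρ‖τ) ≤ ε } satisfies C_{r,ε}(ρ) ≤ C_r(ρ) − ε whenever C_r(ρ) ≥ ε, where C_r(ρ) = min_{δ∈ℐ} S(ρ‖δ) is the relative entropy of coherence. -/
/-! Mixing `ρ` with an optimal incoherent state `δ*` in the proportion `p = ε / C_r(ρ)` gives a
state `τ` with `S(ρ‖τ) ≤ p S(ρ‖δ*) = ε` and `C_r(τ) ≤ S(τ‖δ*) ≤ (1 - p) S(ρ‖δ*) = C_r(ρ) - ε`;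
both inequalities are joint convexity with one pair of arguments equal. -/

open scoped ComplexOrder

/-- The relative entropy of coherence `C_r(ρ) = min_{δ∈ℐ} S(ρ‖δ)`,
where `ℐ` is the set of diagonal (incoherent) density matrices. -/
noncomputable def Cr {d : ℕ}
    (S : Matrix (Fin d) (Fin d) ℂ → Matrix (Fin d) (Fin d) ℂ → ℝ)
    (ρ : Matrix (Fin d) (Fin d) ℂ) : ℝ :=
  sInf (S ρ '' {δ | IsDensity δ ∧ δ.IsDiag})

/-- The ε-smooth relative entropy of coherence
`C_{r,ε}(ρ) = min{C_r(τ) : S(ρ‖τ) ≤ ε}`. -/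
noncomputable def Creps {d : ℕ}
    (S : Matrix (Fin d) (Fin d) ℂ → Matrix (Fin d) (Fin d) ℂ → ℝ)
    (ε : ℝ) (ρ : Matrix (Fin d) (Fin d) ℂ) : ℝ :=
  sInf (Cr S '' {τ | IsDensity τ ∧ S ρ τ ≤ ε})

lemma IsDensity.smul_add_smul {n : Type*} [Fintype n] {A B : Matrix n n ℂ}
    (hA : IsDensity A) (hB : IsDensity B) {p : ℝ} (hp0 : 0 ≤ p) (hp1 : p ≤ 1) :
    IsDensity ((1 - p) • A + p • B) :=
  ⟨(hA.1.smul (sub_nonneg.2 hp1)).add (hB.1.smul hp0), by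
    simp [Matrix.trace_add, Matrix.trace_smul, hA.2, hB.2]⟩

def JointlyConvex {E : Type*} [AddCommGroup E] [Module ℝ E] (S : E → E → ℝ) : Prop :=
  ∀ p : ℝ, 0 ≤ p → p ≤ 1 → ∀ x₁ x₂ y₁ y₂ : E,
    S ((1 - p) • x₁ + p • x₂) ((1 - p) • y₁ + p • y₂) ≤ (1 - p) * S x₁ y₁ + p * S x₂ y₂

namespace JointlyConvex

variable {E : Type*} [AddCommGroup E] [Module ℝ E] {S : E → E → ℝ}

lemma apply_mix_right_le (hS : JointlyConvex S) (hself : ∀ x, S x x = 0) {p : ℝ}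
    (hp0 : 0 ≤ p) (hp1 : p ≤ 1) (x y : E) : S x ((1 - p) • x + p • y) ≤ p * S x y := by
  simpa [hself, ← add_smul] using hS p hp0 hp1 x x x y

lemma apply_mix_left_le (hS : JointlyConvex S) (hself : ∀ x, S x x = 0) {p : ℝ}
    (hp0 : 0 ≤ p) (hp1 : p ≤ 1) (x y : E) : S ((1 - p) • x + p • y) y ≤ (1 - p) * S x y := by
  simpa [hself, ← add_smul] using hS p hp0 hp1 x y y y

end JointlyConvex

section Coherence

variable {d : ℕ} {S : Matrix (Fin d) (Fin d) ℂ → Matrix (Fin d) (Fin d) ℂ → ℝ}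
  {ρ τ δ : Matrix (Fin d) (Fin d) ℂ}

lemma Cr_nonneg (hS : ∀ δ, 0 ≤ S ρ δ) : 0 ≤ Cr S ρ :=
  Real.sInf_nonneg (by rintro _ ⟨δ, _, rfl⟩; exact hS δ)

lemma Cr_le_of_isDiag (hS : ∀ δ, 0 ≤ S ρ δ) (hδ : IsDensity δ ∧ δ.IsDiag) : Cr S ρ ≤ S ρ δ :=
  csInf_le ⟨0, by rintro _ ⟨δ, _, rfl⟩; exact hS δ⟩ ⟨δ, hδ, rfl⟩

lemma Creps_le_Cr {ε : ℝ} (hS : ∀ σ δ, 0 ≤ S σ δ) (hτ : IsDensity τ) (hρτ : S ρ τ ≤ ε) :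
    Creps S ε ρ ≤ Cr S τ :=
  csInf_le ⟨0, by rintro _ ⟨σ, _, rfl⟩; exact Cr_nonneg (hS σ)⟩ ⟨τ, ⟨hτ, hρτ⟩, rfl⟩

end Coherence

/-- `C_{r,ε}(ρ) ≤ C_r(ρ) − ε` whenever `C_r(ρ) ≥ ε`. -/
theorem epsilon_smooth_relative_entropy_coherence_bound
    {d : ℕ} (S : Matrix (Fin d) (Fin d) ℂ → Matrix (Fin d) (Fin d) ℂ → ℝ)
    (hSnn : ∀ ρ τ, 0 ≤ S ρ τ)
    (hself : ∀ ρ, S ρ ρ = 0)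
    -- joint convexity of the relative entropy (pairwise form)
    (hjoint : ∀ p : ℝ, 0 ≤ p → p ≤ 1 →
      ∀ ρ₁ ρ₂ σ₁ σ₂ : Matrix (Fin d) (Fin d) ℂ,
      S ((1 - p) • ρ₁ + p • ρ₂) ((1 - p) • σ₁ + p • σ₂)
        ≤ (1 - p) * S ρ₁ σ₁ + p * S ρ₂ σ₂)
    (ρ : Matrix (Fin d) (Fin d) ℂ) (hρ : IsDensity ρ)
    -- the minimum defining C_r(ρ) is attained at δ*
    (δstar : Matrix (Fin d) (Fin d) ℂ)
    (hδstar : IsDensity δstar ∧ δstar.IsDiag)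
    (hopt : S ρ δstar = Cr S ρ)
    (ε : ℝ) (hε0 : 0 < ε) (hεCr : ε ≤ Cr S ρ) :
    Creps S ε ρ ≤ Cr S ρ - ε := by
  have hS : JointlyConvex S := hjoint
  have hCr : 0 < Cr S ρ := hε0.trans_le hεCr
  set p := ε / Cr S ρ
  have hp0 : 0 ≤ p := by positivity
  have hp1 : p ≤ 1 := (div_le_one hCr).2 hεCr
  have hpCr : p * Cr S ρ = ε := div_mul_cancel₀ ε hCr.ne'
  set τ := (1 - p) • ρ + p • δstar
  have hρτ : S ρ τ ≤ ε :=
    hpCr ▸ hopt ▸ hS.apply_mix_right_le hself hp0 hp1 ρ δstar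
  calc Creps S ε ρ ≤ Cr S τ := Creps_le_Cr hSnn (hρ.smul_add_smul hδstar.1 hp0 hp1) hρτ
    _ ≤ S τ δstar := Cr_le_of_isDiag (hSnn τ) hδstar
    _ ≤ (1 - p) * Cr S ρ := hopt ▸ hS.apply_mix_left_le hself hp0 hp1 ρ δstar
    _ = Cr S ρ - ε := by rw [sub_mul, one_mul, hpCr]
end

section
/- The dual ε-smooth quantifier upper-bounds one-shot coherence distillation: if C_{d,Λ}^{(1),ε}(ρ) = max_Λ { C(Ψ_M) : D(Λ(ρ), Ψ_M) ≤ ε } over incoherent operations Λ satisfying B_ε(Λ(ρ)) ⊆ {Λ(τ) : τ ∈ B_ε(ρ)}, then C_{d,Λ}^{(1),ε}(ρ) ≤ C_{ε,max}(ρ) = max_{τ∈B_ε(ρ)} C(τ). -/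
/-!
Distillation with `Λ` produces a target `Ψ M` in the ε-ball around `Λ ρ`. By the ball-image
hypothesis this target is `Λ τ` for some `τ` in the ε-ball around `ρ`, and monotonicity gives
`C (Ψ M) = C (Λ τ) ≤ C τ ≤ Cmax D C ε ρ`.
-/

/-- The dual ε-smooth measure of coherence (maximization over the ε-ball). -/
noncomputable def Cmax {S : Type*} (D : S → S → ℝ) (C : S → ℝ) (ε : ℝ) (ρ : S) : ℝ :=
  sSup (C '' {τ | D ρ τ ≤ ε})

/-- One-shot coherence distillation under a class `ops` of incoherent operations:
`C_{d,Λ}^{(1),ε}(ρ) = max_Λ {C(Ψ_M) : D(Λ(ρ),Ψ_M) ≤ ε}`,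
where `Ψ M` is the rank-`M` maximally coherent state. -/
noncomputable def oneShotDistill {S : Type*} (D : S → S → ℝ) (C : S → ℝ)
    (ops : Set (S → S)) (Ψ : ℕ → S) (ε : ℝ) (ρ : S) : ℝ :=
  sSup {c | ∃ Λ ∈ ops, ∃ M : ℕ, c = C (Ψ M) ∧ D (Λ ρ) (Ψ M) ≤ ε}

section

variable {S : Type*} {D : S → S → ℝ} {C : S → ℝ} {ε : ℝ} {ρ : S}

theorem Cmax_nonneg (hCnn : ∀ σ, 0 ≤ C σ) : 0 ≤ Cmax D C ε ρ :=
  Real.sSup_nonneg <| by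
    rintro _ ⟨τ, -, rfl⟩
    exact hCnn τ

theorem le_Cmax (hbdd : BddAbove (C '' {τ | D ρ τ ≤ ε})) {τ : S} (hτ : D ρ τ ≤ ε) :
    C τ ≤ Cmax D C ε ρ :=
  le_csSup hbdd ⟨τ, hτ, rfl⟩

theorem le_Cmax_of_ball_subset_image {Λ : S → S} (hCmono : ∀ σ, C (Λ σ) ≤ C σ)
    (hball : {τ | D (Λ ρ) τ ≤ ε} ⊆ Λ '' {τ | D ρ τ ≤ ε})
    (hbdd : BddAbove (C '' {τ | D ρ τ ≤ ε})) {σ : S} (hσ : D (Λ ρ) σ ≤ ε) :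
    C σ ≤ Cmax D C ε ρ := by
  obtain ⟨τ, hτ, rfl⟩ := hball hσ
  exact (hCmono τ).trans (le_Cmax hbdd hτ)

theorem oneShotDistill_le {ops : Set (S → S)} {Ψ : ℕ → S} {a : ℝ} (ha : 0 ≤ a)
    (h : ∀ Λ ∈ ops, ∀ M, D (Λ ρ) (Ψ M) ≤ ε → C (Ψ M) ≤ a) :
    oneShotDistill D C ops Ψ ε ρ ≤ a :=
  Real.sSup_le (by rintro _ ⟨Λ, hΛ, M, rfl, hD⟩; exact h Λ hΛ M hD) ha

end

theorem dual_epsilon_smooth_bounds_one_shot_distillation_general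
    {S : Type*} (D : S → S → ℝ) (C : S → ℝ)
    (hCnn : ∀ σ, 0 ≤ C σ)
    (ops : Set (S → S)) (Ψ : ℕ → S)
    -- each allowed operation is incoherent: C is monotone under it
    (hCmono : ∀ Λ ∈ ops, ∀ σ, C (Λ σ) ≤ C σ)
    (ρ : S) (ε : ℝ)
    -- ball-image hypothesis for each allowed operation
    (hball : ∀ Λ ∈ ops, {τ | D (Λ ρ) τ ≤ ε} ⊆ Λ '' {τ | D ρ τ ≤ ε})
    (hbdd : BddAbove (C '' {τ | D ρ τ ≤ ε})) :
    oneShotDistill D C ops Ψ ε ρ ≤ Cmax D C ε ρ :=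
  oneShotDistill_le (Cmax_nonneg hCnn) fun Λ hΛ _ hD =>
    le_Cmax_of_ball_subset_image (hCmono Λ hΛ) (hball Λ hΛ) hbdd hD

theorem dual_epsilon_smooth_bounds_one_shot_distillation
    {S : Type*} (D : S → S → ℝ) (C : S → ℝ)
    (hCnn : ∀ σ, 0 ≤ C σ)
    (ops : Set (S → S)) (Ψ : ℕ → S)
    -- each allowed operation is incoherent: C is monotone under it
    (hCmono : ∀ Λ ∈ ops, ∀ σ, C (Λ σ) ≤ C σ)
    (ρ : S) (ε : ℝ)
    -- ball-image hypothesis for each allowed operation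
    (hball : ∀ Λ ∈ ops, {τ | D (Λ ρ) τ ≤ ε} ⊆ Λ '' {τ | D ρ τ ≤ ε})
    -- suprema are attained / bounded
    (hattain : ∀ Λ ∈ ops, ∃ τ, D (Λ ρ) τ ≤ ε ∧ C τ = Cmax D C ε (Λ ρ))
    (hbdd : BddAbove (C '' {τ | D ρ τ ≤ ε}))
    (hne : (C '' {τ | D ρ τ ≤ ε}).Nonempty) :
    oneShotDistill D C ops Ψ ε ρ ≤ Cmax D C ε ρ :=
  dual_epsilon_smooth_bounds_one_shot_distillation_general D C hCnn ops Ψ hCmono ρ ε hball hbdd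
end
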